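/- If ξ ∈ ℓ²(Γ) is positive-valued, symmetric (ξ(−γ) = ξ(γ) for all γ), and subconvolutive with constant C (i.e. (ξ*ξ)(γ) ≤ C·ξ(γ) for all γ), then λ := ξ² lies in ℓ¹(Γ) and is subconvolutive with constant C²: (λ*λ)(γ) ≤ C²·λ(γ) for all γ ∈ Γ. (Lemma 4.3.) -/

import Mathlib

/-! Each summand of `(ξ² * ξ²)(γ)` is the square of the corresponding summand of `(ξ * ξ)(γ)`,
and a nonnegative summable family satisfies `∑ tᵢ² ≤ (∑ tᵢ)²`; hence
`(ξ² * ξ²)(γ) ≤ (ξ * ξ)(γ)² ≤ (C ξ(γ))²`. -/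

open ComplexConjugate

noncomputable section

/-- Convolution of real-valued functions on a discrete abelian group. -/
def convR {Γ : Type*} [AddCommGroup Γ] (a b : Γ → ℝ) (γ : Γ) : ℝ :=
  ∑' γ', a (γ - γ') * b γ'

theorem Summable.mul_of_summable_sq {ι : Type*} {f g : ι → ℝ}
    (hf : Summable fun i => f i ^ 2) (hg : Summable fun i => g i ^ 2) :
    Summable fun i => f i * g i :=
  ((hf.add hg).div_const 2).of_norm_bounded fun i => by
    rw [Real.norm_eq_abs, abs_mul, le_div_iff₀ two_pos, ← sq_abs (f i), ← sq_abs (g i)]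
    linarith [two_mul_le_add_sq |f i| |g i|]

theorem summable_convR_summand_of_summable_sq {Γ : Type*} [AddCommGroup Γ] {a b : Γ → ℝ}
    (ha : Summable fun γ => a γ ^ 2) (hb : Summable fun γ => b γ ^ 2) (γ : Γ) :
    Summable fun γ' => a (γ - γ') * b γ' :=
  Summable.mul_of_summable_sq ((Equiv.subLeft γ).summable_iff (f := fun x => a x ^ 2) |>.2 ha) hb

theorem tsum_sq_le_sq_tsum_of_nonneg {ι : Type*} {f : ι → ℝ} (hf_nonneg : ∀ i, 0 ≤ f i)
    (hf : Summable f) : ∑' i, f i ^ 2 ≤ (∑' i, f i) ^ 2 := by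
  have hle : ∀ i, f i ^ 2 ≤ (∑' j, f j) * f i := fun i => by
    rw [sq]
    exact mul_le_mul_of_nonneg_right (hf.le_tsum i fun j _ => hf_nonneg j) (hf_nonneg i)
  calc ∑' i, f i ^ 2
      ≤ ∑' i, (∑' j, f j) * f i :=
        Summable.tsum_le_tsum hle
          ((hf.mul_left _).of_nonneg_of_le (fun i => sq_nonneg (f i)) hle) (hf.mul_left _)
    _ = (∑' i, f i) ^ 2 := by rw [tsum_mul_left, sq]

theorem hh_sq_subconvolutive_general {Γ : Type*} [AddCommGroup Γ]
    (xi : Γ → ℝ) (hxi_pos : ∀ γ, 0 < xi γ)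
    (hxi_l2 : Summable fun γ => xi γ ^ 2)
    (C : ℝ) (hxi_subconv : ∀ γ, convR xi xi γ ≤ C * xi γ) :
    Summable (fun γ => xi γ ^ 2) ∧
      ∀ γ : Γ, convR (fun γ' => xi γ' ^ 2) (fun γ' => xi γ' ^ 2) γ ≤ C ^ 2 * xi γ ^ 2 := by
  refine ⟨hxi_l2, fun γ => ?_⟩
  have hsummand_nonneg : ∀ γ', 0 ≤ xi (γ - γ') * xi γ' :=
    fun γ' => mul_nonneg (hxi_pos _).le (hxi_pos _).le
  calc convR (fun γ' => xi γ' ^ 2) (fun γ' => xi γ' ^ 2) γ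
      = ∑' γ', (xi (γ - γ') * xi γ') ^ 2 := by simp only [convR, mul_pow]
    _ ≤ convR xi xi γ ^ 2 :=
        tsum_sq_le_sq_tsum_of_nonneg hsummand_nonneg
          (summable_convR_summand_of_summable_sq hxi_l2 hxi_l2 γ)
    _ ≤ (C * xi γ) ^ 2 := pow_le_pow_left₀ (tsum_nonneg hsummand_nonneg) (hxi_subconv γ) 2
    _ = C ^ 2 * xi γ ^ 2 := mul_pow C (xi γ) 2

/-- Lemma 4.3: if `ξ ∈ ℓ²(Γ)` is positive-valued, symmetric and
subconvolutive with constant `C`, then `λ := ξ²` lies in `ℓ¹(Γ)` and is subconvolutive with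
constant `C²`. -/
theorem hh_sq_subconvolutive {Γ : Type*} [AddCommGroup Γ]
    (xi : Γ → ℝ) (hxi_pos : ∀ γ, 0 < xi γ) (hxi_symm : ∀ γ, xi (-γ) = xi γ)
    (hxi_l2 : Summable fun γ => xi γ ^ 2)
    (C : ℝ) (hxi_subconv : ∀ γ, convR xi xi γ ≤ C * xi γ) :
    Summable (fun γ => xi γ ^ 2) ∧
      ∀ γ : Γ, convR (fun γ' => xi γ' ^ 2) (fun γ' => xi γ' ^ 2) γ ≤ C ^ 2 * xi γ ^ 2 :=
  hh_sq_subconvolutive_general xi hxi_pos hxi_l2 C hxi_subconv
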